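/- Let k be a field, let V and W be finite-dimensional k-vector spaces, let A : V → V and B : W → W be linear endomorphisms, let λ ∈ k be nonzero, and suppose there exists a nonzero vector w ∈ W with B(w) = λ⁻¹ · w. If the induced endomorphism A ⊗ B of the tensor product V ⊗ W is 1-semi-simple (i.e. the natural map ker(id − A⊗B) → (V ⊗ W)/im(id − A⊗B) is an isomorphism), then the generalized eigenspace of A for the eigenvalue λ equals the eigenspace of A for the eigenvalue λ; that is, A is semi-simple at the eigenvalue λ. -/

import Mathlib

/-!
If `A u = λ u` and `B w = λ⁻¹ w`, then `u ⊗ w` is fixed by `A ⊗ B`; if moreover `u = (A - λ) v`,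
then `u ⊗ w = -λ • (id - A ⊗ B) (v ⊗ w)` also lies in the image of `id - A ⊗ B`. Injectivity of
the map from invariants to coinvariants forces `u ⊗ w = 0`, hence `u = 0` since `w ≠ 0`. Thus
`ker (A - λ)² = ker (A - λ)`, and the kernels of the powers of `A - λ` stabilise at the first step.
-/

noncomputable def invariantsToCoinvariants {R : Type*} [CommRing R] {V : Type*}
    [AddCommGroup V] [Module R V] (F : V →ₗ[R] V) :
    LinearMap.ker (LinearMap.id - F) →ₗ[R] V ⧸ LinearMap.range (LinearMap.id - F) :=
  (LinearMap.range (LinearMap.id - F)).mkQ ∘ₗ (LinearMap.ker (LinearMap.id - F)).subtype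

theorem injective_invariantsToCoinvariants_iff {R V : Type*} [CommRing R] [AddCommGroup V]
    [Module R V] (F : V →ₗ[R] V) :
    Function.Injective (invariantsToCoinvariants F) ↔
      Disjoint (LinearMap.ker (LinearMap.id - F)) (LinearMap.range (LinearMap.id - F)) := by
  rw [invariantsToCoinvariants, ← LinearMap.ker_eq_bot, LinearMap.ker_comp,
    Submodule.ker_mkQ, Submodule.disjoint_iff_comap_eq_bot]

theorem TensorProduct.tmul_ne_zero {k V W : Type*} [Field k] [AddCommGroup V] [Module k V]
    [AddCommGroup W] [Module k W] {v : V} {w : W} (hv : v ≠ 0) (hw : w ≠ 0) :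
    v ⊗ₜ[k] w ≠ 0 := by
  obtain ⟨f, hf⟩ := Module.Projective.exists_dual_eq_one k hw
  intro h
  exact hv (by simpa [hf] using congrArg (TensorProduct.rid k V ∘ LinearMap.lTensor V f) h)

theorem TensorProduct.id_sub_map_tmul_of_apply_eq_smul {R V W : Type*} [CommRing R]
    [AddCommGroup V] [Module R V] [AddCommGroup W] [Module R W] (A : V →ₗ[R] V)
    {B : W →ₗ[R] W} {μ : R} {w : W} (hw : B w = μ • w) (v : V) :
    (LinearMap.id - TensorProduct.map A B : Module.End R (TensorProduct R V W)) (v ⊗ₜ w) =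
      (v - μ • A v) ⊗ₜ[R] w := by
  simp [hw, TensorProduct.sub_tmul, TensorProduct.smul_tmul]

theorem Module.End.iSup_ker_pow_eq_ker_of_ker_sq_le {R M : Type*} [Semiring R]
    [AddCommMonoid M] [Module R M] {f : Module.End R M}
    (h : LinearMap.ker (f ^ 2) ≤ LinearMap.ker f) :
    ⨆ n : ℕ, LinearMap.ker (f ^ n) = LinearMap.ker f := by
  have hle : ∀ n : ℕ, LinearMap.ker (f ^ n) ≤ LinearMap.ker f := by
    intro n
    induction n with
    | zero => intro v hv; simp_all
    | succ n ih =>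
      intro v hv
      have hfv : f (f v) = 0 := ih (by simpa [pow_succ] using hv)
      exact h (by simpa [pow_two] using hfv)
  exact le_antisymm (iSup_le hle) (le_iSup_of_le 1 (by simp))

theorem semisimple_at_eigenvalue_of_tensor_oneSemisimple_general
    (k : Type*) [Field k] (V W : Type*)
    [AddCommGroup V] [Module k V]
    [AddCommGroup W] [Module k W]
    (A : V →ₗ[k] V) (B : W →ₗ[k] W) (lam : k) (hlam : lam ≠ 0)
    (hw : ∃ w : W, w ≠ 0 ∧ B w = lam⁻¹ • w)
    (hT : Function.Bijective (invariantsToCoinvariants (TensorProduct.map A B))) :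
    (⨆ n : ℕ, LinearMap.ker ((A - lam • LinearMap.id) ^ n)) =
      LinearMap.ker (A - lam • LinearMap.id) := by
  obtain ⟨w, hw0, hBw⟩ := hw
  have hdisj := (injective_invariantsToCoinvariants_iff _).mp hT.injective
  refine Module.End.iSup_ker_pow_eq_ker_of_ker_sq_le fun v hv => ?_
  set u : V := (A - lam • LinearMap.id : Module.End k V) v
  have hAu : A u = lam • u := by
    simpa [pow_two, sub_eq_zero, u] using hv
  have hfixed : u ⊗ₜ w ∈ LinearMap.ker (LinearMap.id - TensorProduct.map A B) := by
    simp [TensorProduct.id_sub_map_tmul_of_apply_eq_smul A hBw, hAu, smul_smul, hlam]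
  have himage : u ⊗ₜ w ∈ LinearMap.range (LinearMap.id - TensorProduct.map A B) := by
    refine ⟨(-lam) • v ⊗ₜ w, ?_⟩
    rw [map_smul, TensorProduct.id_sub_map_tmul_of_apply_eq_smul A hBw, TensorProduct.smul_tmul']
    congr 1
    simp [u, smul_sub, smul_smul, hlam, neg_add_eq_sub]
  by_contra hu0
  exact TensorProduct.tmul_ne_zero hu0 hw0 (Submodule.disjoint_def.mp hdisj _ hfixed himage)

/-- Let `A : V → V` and `B : W → W` be endomorphisms of finite-dimensional
`k`-vector spaces, `λ ≠ 0`, and suppose some nonzero `w ∈ W` satisfies `B w = λ⁻¹ • w`.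
If the induced endomorphism `A ⊗ B` of `V ⊗ W` is 1-semi-simple, then the generalized
eigenspace of `A` at `λ` equals the eigenspace of `A` at `λ`, i.e. `A` is semi-simple at
the eigenvalue `λ`. -/
theorem semisimple_at_eigenvalue_of_tensor_oneSemisimple
    (k : Type*) [Field k] (V W : Type*)
    [AddCommGroup V] [Module k V] [FiniteDimensional k V]
    [AddCommGroup W] [Module k W] [FiniteDimensional k W]
    (A : V →ₗ[k] V) (B : W →ₗ[k] W) (lam : k) (hlam : lam ≠ 0)
    (hw : ∃ w : W, w ≠ 0 ∧ B w = lam⁻¹ • w)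
    (hT : Function.Bijective (invariantsToCoinvariants (TensorProduct.map A B))) :
    (⨆ n : ℕ, LinearMap.ker ((A - lam • LinearMap.id) ^ n)) =
      LinearMap.ker (A - lam • LinearMap.id) :=
  semisimple_at_eigenvalue_of_tensor_oneSemisimple_general k V W A B lam hlam hw hT
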